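/- arXiv:2401.09108 — 5 statements merged into one kernel-verified Lean document; each statement's English description precedes it below -/
import Mathlib

section
/- Let ω(x) = (2πσ₁²)⁻¹ e^{−|x|²/(2σ₁²)} − κ(2πσ₂²)⁻¹ e^{−|x|²/(2σ₂²)} on ℝ² with 0 < σ₁ < σ₂, κ > 0 and σ₁√κ < σ₂. Then the L¹-norm of ω equals ‖ω‖₁ = (1 − κ) + 2(κ e^{−Θ²/(2σ₂²)} − e^{−Θ²/(2σ₁²)}), where Θ = σ₁σ₂ sqrt( 2 log(σ₂²/(κσ₁²)) / (σ₂² − σ₁²) ). -/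
/-!
In polar coordinates `‖ω‖₁ = 2π ∫₀^∞ r |g r| dr` for the radial profile `g` of `ω`. Comparing
logarithms, `g r ≥ 0` exactly for `r ≤ Θ`, so `∫₀^∞ r |g r| = ∫₀^∞ r g r - 2 ∫_Θ^∞ r g r`, and both
terms are explicit because `-e^{-b r²}/(2b)` is a primitive of `r e^{-b r²}`.
-/

open MeasureTheory Real Set Filter

lemma hasDerivAt_neg_exp_neg_mul_sq_div (b r : ℝ) (hb : b ≠ 0) :
    HasDerivAt (fun r : ℝ => -exp (-b * r ^ 2) / (2 * b)) (r * exp (-b * r ^ 2)) r := by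
  have hsq : HasDerivAt (fun r : ℝ => -b * r ^ 2) (-b * (2 * r)) r := by
    simpa using (hasDerivAt_pow 2 r).const_mul (-b)
  refine (hsq.exp.neg.div_const (2 * b)).congr_deriv ?_
  field_simp

lemma integral_Ioi_mul_exp_neg_mul_sq {b : ℝ} (hb : 0 < b) (c : ℝ) :
    ∫ r in Ioi c, r * exp (-b * r ^ 2) = exp (-b * c ^ 2) / (2 * b) := by
  have hlim : Tendsto (fun r : ℝ => -exp (-b * r ^ 2) / (2 * b)) atTop (nhds 0) := by
    have hexp : Tendsto (fun r : ℝ => -b * r ^ 2) atTop atBot :=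
      (tendsto_pow_atTop two_ne_zero).const_mul_atTop_of_neg (neg_neg_iff_pos.mpr hb)
    simpa using (tendsto_exp_atBot.comp hexp).neg.div_const (2 * b)
  rw [integral_Ioi_of_hasDerivAt_of_tendsto'
    (fun r _ => hasDerivAt_neg_exp_neg_mul_sq_div b r hb.ne')
    (integrable_mul_exp_neg_mul_sq hb).integrableOn hlim]
  ring

lemma integral_fun_norm_euclideanSpace_fin_two (g : ℝ → ℝ) :
    ∫ x : EuclideanSpace ℝ (Fin 2), g ‖x‖ = 2 * π * ∫ r in Ioi (0 : ℝ), r * g r := by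
  rw [integral_fun_norm_addHaar volume g, finrank_euclideanSpace_fin, measureReal_def,
    EuclideanSpace.volume_ball_fin_two]
  simp [ENNReal.toReal_ofReal pi_nonneg, mul_assoc]

lemma setIntegral_Ioi_abs_of_sign_change {f : ℝ → ℝ} {s T : ℝ} (hsT : s ≤ T)
    (hf : IntegrableOn f (Ioi s)) (hpos : ∀ x ∈ Ioc s T, 0 ≤ f x)
    (hneg : ∀ x ∈ Ioi T, f x ≤ 0) :
    ∫ x in Ioi s, |f x| = (∫ x in Ioi s, f x) - 2 * ∫ x in Ioi T, f x := by
  have hsplit : ∀ g : ℝ → ℝ, IntegrableOn g (Ioi s) →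
      ∫ x in Ioi s, g x = (∫ x in Ioc s T, g x) + ∫ x in Ioi T, g x := fun g hg => by
    rw [← setIntegral_union (Ioc_disjoint_Ioi le_rfl) measurableSet_Ioi
      (hg.mono_set Ioc_subset_Ioi_self) (hg.mono_set (Ioi_subset_Ioi hsT)),
      Ioc_union_Ioi_eq_Ioi hsT]
  have hIoc : ∫ x in Ioc s T, |f x| = ∫ x in Ioc s T, f x :=
    setIntegral_congr_fun measurableSet_Ioc fun x hx => abs_of_nonneg (hpos x hx)
  have hIoi : ∫ x in Ioi T, |f x| = -∫ x in Ioi T, f x := by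
    rw [← integral_neg]
    exact setIntegral_congr_fun measurableSet_Ioi fun x hx => abs_of_nonpos (hneg x hx)
  rw [hsplit (fun x => |f x|) hf.abs, hsplit (fun x => f x) hf, hIoc, hIoi]
  ring

noncomputable def gaussianProfile (σ r : ℝ) : ℝ :=
  (2 * π * σ ^ 2)⁻¹ * exp (-r ^ 2 / (2 * σ ^ 2))

lemma gaussianProfile_pos {σ : ℝ} (hσ : σ ≠ 0) (r : ℝ) : 0 < gaussianProfile σ r := by
  unfold gaussianProfile
  have := pi_pos
  positivity

lemma mul_gaussianProfile_eq (σ r : ℝ) :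
    r * gaussianProfile σ r = (2 * π * σ ^ 2)⁻¹ * (r * exp (-(2 * σ ^ 2)⁻¹ * r ^ 2)) := by
  unfold gaussianProfile
  ring_nf

lemma integrable_mul_gaussianProfile {σ : ℝ} (hσ : σ ≠ 0) :
    Integrable fun r => r * gaussianProfile σ r := by
  simp_rw [mul_gaussianProfile_eq]
  exact (integrable_mul_exp_neg_mul_sq (by positivity)).const_mul _

lemma integral_Ioi_mul_gaussianProfile {σ : ℝ} (hσ : σ ≠ 0) (c : ℝ) :
    2 * π * ∫ r in Ioi c, r * gaussianProfile σ r = exp (-c ^ 2 / (2 * σ ^ 2)) := by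
  simp_rw [mul_gaussianProfile_eq]
  rw [integral_const_mul, integral_Ioi_mul_exp_neg_mul_sq (by positivity)]
  have := pi_pos.ne'
  field_simp

noncomputable def dogProfile (σ₁ σ₂ κ r : ℝ) : ℝ :=
  gaussianProfile σ₁ r - κ * gaussianProfile σ₂ r

lemma integrable_mul_dogProfile {σ₁ σ₂ : ℝ} (hσ₁ : σ₁ ≠ 0) (hσ₂ : σ₂ ≠ 0) (κ : ℝ) :
    Integrable fun r => r * dogProfile σ₁ σ₂ κ r :=
  ((integrable_mul_gaussianProfile hσ₁).sub
    ((integrable_mul_gaussianProfile hσ₂).const_mul κ)).congr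
    (Eventually.of_forall fun r => by simp only [dogProfile, Pi.sub_apply]; ring)

lemma integral_Ioi_mul_dogProfile {σ₁ σ₂ : ℝ} (hσ₁ : σ₁ ≠ 0) (hσ₂ : σ₂ ≠ 0) (κ c : ℝ) :
    2 * π * ∫ r in Ioi c, r * dogProfile σ₁ σ₂ κ r
      = exp (-c ^ 2 / (2 * σ₁ ^ 2)) - κ * exp (-c ^ 2 / (2 * σ₂ ^ 2)) := by
  simp only [dogProfile, mul_sub, mul_left_comm _ κ]
  rw [integral_sub (integrable_mul_gaussianProfile hσ₁).integrableOn
    ((integrable_mul_gaussianProfile hσ₂).const_mul κ).integrableOn, integral_const_mul]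
  linear_combination integral_Ioi_mul_gaussianProfile hσ₁ c
    - κ * integral_Ioi_mul_gaussianProfile hσ₂ c

lemma dogProfile_nonneg_iff {σ₁ σ₂ κ : ℝ} (hσ₁ : 0 < σ₁) (hσ₁₂ : σ₁ < σ₂) (hκ : 0 < κ)
    {r : ℝ} (hr : 0 < r) :
    0 ≤ dogProfile σ₁ σ₂ κ r ↔
      r ≤ σ₁ * σ₂ * √(2 * log (σ₂ ^ 2 / (κ * σ₁ ^ 2)) / (σ₂ ^ 2 - σ₁ ^ 2)) := by
  have hσ₂ : 0 < σ₂ := hσ₁.trans hσ₁₂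
  have hd : 0 < σ₂ ^ 2 - σ₁ ^ 2 := by nlinarith
  set L := log (σ₂ ^ 2 / (κ * σ₁ ^ 2))
  set y := r ^ 2 * (σ₂ ^ 2 - σ₁ ^ 2) / (2 * σ₁ ^ 2 * σ₂ ^ 2) with hy
  have hratio : gaussianProfile σ₁ r = σ₂ ^ 2 / σ₁ ^ 2 * exp (-y) * gaussianProfile σ₂ r := by
    have hexp : exp (-r ^ 2 / (2 * σ₁ ^ 2)) = exp (-y) * exp (-r ^ 2 / (2 * σ₂ ^ 2)) := by
      rw [← exp_add, hy]
      congr 1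
      field_simp
      ring
    unfold gaussianProfile
    rw [hexp]
    field_simp
  have hlog : 0 ≤ dogProfile σ₁ σ₂ κ r ↔ y ≤ L := by
    rw [dogProfile, sub_nonneg, hratio,
      mul_le_mul_iff_of_pos_right (gaussianProfile_pos hσ₂.ne' r), le_log_iff_exp_le (by positivity),
      exp_neg, ← div_eq_mul_inv, le_div_iff₀ (exp_pos y), le_div_iff₀ (by positivity),
      le_div_iff₀ (by positivity)]
    ring_nf
  have hsqrt : y ≤ L ↔ r ≤ σ₁ * σ₂ * √(2 * L / (σ₂ ^ 2 - σ₁ ^ 2)) := by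
    rw [← div_le_iff₀' (by positivity), le_sqrt' (by positivity), div_pow,
      div_le_div_iff₀ (by positivity) hd, div_le_iff₀ (by positivity)]
    ring_nf
  exact hlog.trans hsqrt

theorem stmt2_general (σ₁ σ₂ κ : ℝ) (hσ₁ : 0 < σ₁) (hσ₁₂ : σ₁ < σ₂) (hκ : 0 < κ)
    (ω : EuclideanSpace ℝ (Fin 2) → ℝ)
    (hω : ∀ x, ω x = (2 * π * σ₁ ^ 2)⁻¹ * Real.exp (-‖x‖ ^ 2 / (2 * σ₁ ^ 2))
      - κ * (2 * π * σ₂ ^ 2)⁻¹ * Real.exp (-‖x‖ ^ 2 / (2 * σ₂ ^ 2)))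
    (Θ : ℝ)
    (hΘ : Θ = σ₁ * σ₂ * Real.sqrt (2 * Real.log (σ₂ ^ 2 / (κ * σ₁ ^ 2)) / (σ₂ ^ 2 - σ₁ ^ 2))) :
    ∫ x, |ω x| = (1 - κ)
      + 2 * (κ * Real.exp (-Θ ^ 2 / (2 * σ₂ ^ 2)) - Real.exp (-Θ ^ 2 / (2 * σ₁ ^ 2))) := by
  have hσ₂ : 0 < σ₂ := hσ₁.trans hσ₁₂
  set f : ℝ → ℝ := fun r => r * dogProfile σ₁ σ₂ κ r
  have hsign : ∀ r, 0 < r → (0 ≤ f r ↔ r ≤ Θ) := fun r hr => by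
    rw [mul_nonneg_iff_of_pos_left hr, hΘ, dogProfile_nonneg_iff hσ₁ hσ₁₂ hκ hr]
  have hΘ0 : 0 ≤ Θ := by rw [hΘ]; positivity
  have hωf : ∀ x, |ω x| = |dogProfile σ₁ σ₂ κ ‖x‖| := fun x => by
    rw [hω, dogProfile, gaussianProfile, gaussianProfile, mul_assoc κ]
  calc ∫ x, |ω x| = 2 * π * ∫ r in Ioi (0 : ℝ), |f r| := by
        simp_rw [hωf, integral_fun_norm_euclideanSpace_fin_two fun r => |dogProfile σ₁ σ₂ κ r|]
        congr 1
        refine setIntegral_congr_fun measurableSet_Ioi fun r hr => ?_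
        simp only [f, abs_mul, abs_of_pos hr.out]
    _ = (2 * π * ∫ r in Ioi (0 : ℝ), f r) - 2 * (2 * π * ∫ r in Ioi Θ, f r) := by
        rw [setIntegral_Ioi_abs_of_sign_change hΘ0
          (integrable_mul_dogProfile hσ₁.ne' hσ₂.ne' κ).integrableOn
          (fun r hr => (hsign r hr.1).2 hr.2)
          (fun r hr => le_of_not_ge fun h => hr.out.not_ge ((hsign r (hΘ0.trans_lt hr)).1 h))]
        ring
    _ = _ := by
        simp only [f, integral_Ioi_mul_dogProfile hσ₁.ne' hσ₂.ne', ne_eq, OfNat.ofNat_ne_zero,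
          not_false_eq_true, zero_pow, neg_zero, zero_div, exp_zero, mul_one]
        ring

/-- Explicit value of the `L¹`-norm of the 2D DoG kernel. -/
theorem stmt2 (σ₁ σ₂ κ : ℝ) (hσ₁ : 0 < σ₁) (hσ₁₂ : σ₁ < σ₂) (hκ : 0 < κ)
    (hκσ : σ₁ * Real.sqrt κ < σ₂)
    (ω : EuclideanSpace ℝ (Fin 2) → ℝ)
    (hω : ∀ x, ω x = (2 * π * σ₁ ^ 2)⁻¹ * Real.exp (-‖x‖ ^ 2 / (2 * σ₁ ^ 2))
      - κ * (2 * π * σ₂ ^ 2)⁻¹ * Real.exp (-‖x‖ ^ 2 / (2 * σ₂ ^ 2)))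
    (Θ : ℝ)
    (hΘ : Θ = σ₁ * σ₂ * Real.sqrt (2 * Real.log (σ₂ ^ 2 / (κ * σ₁ ^ 2)) / (σ₂ ^ 2 - σ₁ ^ 2))) :
    ∫ x, |ω x| = (1 - κ)
      + 2 * (κ * Real.exp (-Θ ^ 2 / (2 * σ₂ ^ 2)) - Real.exp (-Θ ^ 2 / (2 * σ₁ ^ 2))) :=
  stmt2_general σ₁ σ₂ κ hσ₁ hσ₁₂ hκ ω hω Θ hΘ
end

section
/- Let f: ℝ → ℝ be α-Lipschitz with f(0) = 0, let ω ∈ L¹(ℝ²), μ > 0 with μα‖ω‖₁ < 1, and I ∈ L^∞(ℝ²). Then there exists a unique a_I ∈ L^∞(ℝ²) satisfying the stationary equation a_I = μ ω ∗ f(a_I) + I, where (ω ∗ v)(x) = ∫_{ℝ²} ω(x−y)v(y) dy. -/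
open MeasureTheory Real

/-!
The right-hand side `F a = μ ω ∗ f(a) + I` maps bounded measurable functions to bounded
measurable functions, and since `|f s - f t| ≤ α |s - t|` and `∫ |ω (x - y)| dy = ‖ω‖₁`, it is
Lipschitz with constant `μ α ‖ω‖₁ < 1` for the sup distance. Bounded measurable functions form a
closed subset of the complete space of all functions with the uniform extended metric, on which
any two points are at finite distance, so Banach's fixed point theorem applies there.
-/

open Set Filter UniformFun
open scoped UniformConvergence NNReal ENNReal

theorem existsUnique_isFixedPt_of_lipschitzOnWith {X : Type*} [EMetricSpace X] {F : X → X}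
    {s : Set X} {K : ℝ≥0} (hs : IsComplete s) (hsF : MapsTo F s s) (hK : K < 1)
    (hF : LipschitzOnWith K F s) (hfin : ∀ x ∈ s, ∀ y ∈ s, edist x y ≠ ⊤) {x₀ : X}
    (hx₀ : x₀ ∈ s) : ∃! x, x ∈ s ∧ Function.IsFixedPt F x := by
  have hc : ContractingWith K (hsF.restrict F s s) := ⟨hK, fun a b => hF a.2 b.2⟩
  obtain ⟨y, hys, hy, -⟩ := hc.exists_fixedPoint' hs hsF hx₀ (hfin _ hx₀ _ (hsF hx₀))
  refine ⟨y, ⟨hys, hy⟩, fun z ⟨hzs, hz⟩ => ?_⟩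
  have := hc.eq_or_edist_eq_top_of_fixedPoints (x := ⟨z, hzs⟩) (y := ⟨y, hys⟩)
    (Subtype.ext hz) (Subtype.ext hy)
  exact congrArg Subtype.val (this.resolve_right (hfin z hzs y hys))

namespace UniformFun

theorem isClosed_setOf_measurable {α β : Type*} [MeasurableSpace α] [PseudoEMetricSpace β]
    [MeasurableSpace β] [BorelSpace β] : IsClosed {g : α →ᵤ β | Measurable (toFun g)} :=
  IsSeqClosed.isClosed fun _ _ hp hlim => measurable_of_tendsto_metrizable hp <|
    tendsto_pi_nhds.2 fun x => ((lipschitzWith_eval x).continuous.tendsto _).comp hlim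

variable {α : Type*}

theorem abs_sub_le_toReal_edist {g h : α →ᵤ ℝ} (hgh : edist g h ≠ ⊤) (x : α) :
    |toFun g x - toFun h x| ≤ (edist g h).toReal := by
  rw [← Real.dist_eq, dist_edist]
  exact ENNReal.toReal_mono hgh edist_eval_le

theorem edist_zero_lt_top_iff {g : α →ᵤ ℝ} : edist g 0 < ⊤ ↔ ∃ C, ∀ x, |toFun g x| ≤ C := by
  refine ⟨fun hg => ⟨_, fun x => by simpa using abs_sub_le_toReal_edist hg.ne x⟩, ?_⟩
  rintro ⟨C, hC⟩
  refine lt_of_le_of_lt (edist_le.2 fun x => ?_) ENNReal.ofReal_lt_top (b := ENNReal.ofReal C)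
  rw [edist_dist, Real.dist_eq]
  exact ENNReal.ofReal_le_ofReal (by simpa using hC x)

variable [MeasurableSpace α]

variable (α) in
/-- The paper's `L^∞` without quotienting by null sets; boundedness of `g` is encoded as
`edist g 0 < ⊤` for the sup distance. -/
def boundedMeasurable : Set (α →ᵤ ℝ) := {g | Measurable (toFun g)} ∩ Metric.eball 0 ⊤

theorem mem_boundedMeasurable_iff {g : α → ℝ} :
    ofFun g ∈ boundedMeasurable α ↔ Measurable g ∧ ∃ C, ∀ x, |g x| ≤ C :=
  and_congr_right' edist_zero_lt_top_iff

theorem isClosed_boundedMeasurable : IsClosed (boundedMeasurable α) :=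
  isClosed_setOf_measurable.inter Metric.isClosed_eball_top

theorem edist_ne_top_of_mem_boundedMeasurable {g h : α →ᵤ ℝ} (hg : g ∈ boundedMeasurable α)
    (hh : h ∈ boundedMeasurable α) : edist g h ≠ ⊤ :=
  ((edist_triangle_right g h 0).trans_lt (ENNReal.add_lt_top.2 ⟨hg.2, hh.2⟩)).ne

end UniformFun

theorem LipschitzWith.abs_le_of_abs_le {f : ℝ → ℝ} {L : ℝ≥0} (hf : LipschitzWith L f) {s C : ℝ}
    (hs : |s| ≤ C) : |f s| ≤ |f 0| + L * C := by
  have h := hf.dist_le_mul s 0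
  rw [Real.dist_eq, Real.dist_eq, sub_zero] at h
  have := abs_sub_abs_le_abs_sub (f s) (f 0)
  nlinarith [mul_le_mul_of_nonneg_left hs L.coe_nonneg]

section Convolution

variable {G : Type*} [MeasurableSpace G] [AddGroup G] [MeasurableAdd G] [MeasurableNeg G]
  {ν : Measure G} [ν.IsNegInvariant] [ν.IsAddLeftInvariant] {ω v : G → ℝ} {C : ℝ}

theorem integrable_sub_left_mul (hω : Integrable ω ν) (hv : AEStronglyMeasurable v ν)
    (hC : ∀ y, |v y| ≤ C) (x : G) : Integrable (fun y => ω (x - y) * v y) ν :=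
  (hω.comp_sub_left x).mul_bdd hv (Eventually.of_forall hC)

theorem abs_integral_sub_left_mul_le (hω : Integrable ω ν) (hC : ∀ y, |v y| ≤ C) (x : G) :
    |∫ y, ω (x - y) * v y ∂ν| ≤ (∫ y, |ω y| ∂ν) * C :=
  calc |∫ y, ω (x - y) * v y ∂ν|
      ≤ ∫ y, |ω (x - y)| * C ∂ν :=
        norm_integral_le_of_norm_le ((hω.comp_sub_left x).abs.mul_const C) <|
          Eventually.of_forall fun y => by
            rw [Real.norm_eq_abs, abs_mul]
            exact mul_le_mul_of_nonneg_left (hC y) (abs_nonneg _)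
    _ = (∫ y, |ω y| ∂ν) * C := by
        rw [integral_mul_const, integral_sub_left_eq_self (fun y => |ω y|) ν x]

theorem measurable_integral_sub_left_mul [MeasurableAdd₂ G] [SFinite ν]
    (hω : AEStronglyMeasurable ω ν) (hv : Measurable v) :
    Measurable fun x => ∫ y, ω (x - y) * v y ∂ν := by
  have h_mk (x : G) : ∫ y, ω (x - y) * v y ∂ν = ∫ y, hω.mk ω (x - y) * v y ∂ν := by
    refine integral_congr_ae ?_
    filter_upwards [(Measure.measurePreserving_sub_left ν x).quasiMeasurePreserving.ae_eq_comp
      hω.ae_eq_mk] with y hy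
    exact congrArg (· * v y) hy
  simp_rw [h_mk]
  exact ((hω.stronglyMeasurable_mk.comp_measurable measurable_sub).mul
    (hv.comp measurable_snd).stronglyMeasurable).integral_prod_right'.measurable

end Convolution

section NeuralField

variable {G : Type*} [MeasurableSpace G] [AddGroup G] [MeasurableAdd G] [MeasurableNeg G]
  {ν : Measure G} [ν.IsNegInvariant] [ν.IsAddLeftInvariant]
  {μ : ℝ} {ω : G → ℝ} {f : ℝ → ℝ} {L : ℝ≥0} {I a b : G → ℝ}

noncomputable def neuralFieldMap (ν : Measure G) (μ : ℝ) (ω : G → ℝ) (f : ℝ → ℝ) (I a : G → ℝ) :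
    G → ℝ :=
  fun x => μ * ∫ y, ω (x - y) * f (a y) ∂ν + I x

theorem measurable_neuralFieldMap [MeasurableAdd₂ G] [SFinite ν] (hω : AEStronglyMeasurable ω ν)
    (hf : Measurable f) (hI : Measurable I) (ha : Measurable a) :
    Measurable (neuralFieldMap ν μ ω f I a) :=
  ((measurable_integral_sub_left_mul hω (hf.comp ha)).const_mul μ).add hI

theorem exists_bound_neuralFieldMap (hω : Integrable ω ν) (hf : LipschitzWith L f) {CI Ca : ℝ}
    (hI : ∀ x, |I x| ≤ CI) (ha : ∀ x, |a x| ≤ Ca) :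
    ∃ C, ∀ x, |neuralFieldMap ν μ ω f I a x| ≤ C := by
  refine ⟨|μ| * ((∫ y, |ω y| ∂ν) * (|f 0| + L * Ca)) + CI, fun x => ?_⟩
  calc |neuralFieldMap ν μ ω f I a x|
      ≤ |μ| * |∫ y, ω (x - y) * f (a y) ∂ν| + |I x| := by
        rw [← abs_mul]; exact abs_add_le _ _
    _ ≤ _ := by
        gcongr
        exacts [abs_integral_sub_left_mul_le hω (fun y => hf.abs_le_of_abs_le (ha y)) x, hI x]

theorem abs_neuralFieldMap_sub_le (hμ : 0 ≤ μ) (hω : Integrable ω ν) (hf : LipschitzWith L f)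
    (ha : Measurable a) (hb : Measurable b) {Ca Cb D : ℝ} (hCa : ∀ y, |a y| ≤ Ca)
    (hCb : ∀ y, |b y| ≤ Cb) (hD : ∀ y, |a y - b y| ≤ D) (x : G) :
    |neuralFieldMap ν μ ω f I a x - neuralFieldMap ν μ ω f I b x|
      ≤ μ * L * (∫ y, |ω y| ∂ν) * D := by
  have hfa : Integrable (fun y => ω (x - y) * f (a y)) ν :=
    integrable_sub_left_mul hω (hf.continuous.measurable.comp ha).aestronglyMeasurable
      (fun y => hf.abs_le_of_abs_le (hCa y)) x
  have hfb : Integrable (fun y => ω (x - y) * f (b y)) ν :=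
    integrable_sub_left_mul hω (hf.continuous.measurable.comp hb).aestronglyMeasurable
      (fun y => hf.abs_le_of_abs_le (hCb y)) x
  have hfab (y : G) : |f (a y) - f (b y)| ≤ L * D := by
    simpa only [Real.dist_eq] using
      (hf.dist_le_mul (a y) (b y)).trans (mul_le_mul_of_nonneg_left (hD y) L.coe_nonneg)
  calc |neuralFieldMap ν μ ω f I a x - neuralFieldMap ν μ ω f I b x|
      = μ * |∫ y, ω (x - y) * (f (a y) - f (b y)) ∂ν| := by
        simp only [neuralFieldMap, add_sub_add_right_eq_sub, ← mul_sub, ← integral_sub hfa hfb,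
          abs_mul, abs_of_nonneg hμ]
    _ ≤ μ * ((∫ y, |ω y| ∂ν) * (L * D)) := by
        gcongr; exact abs_integral_sub_left_mul_le hω hfab x
    _ = μ * L * (∫ y, |ω y| ∂ν) * D := by ring

theorem mapsTo_neuralFieldMap [MeasurableAdd₂ G] [SFinite ν] (hω : Integrable ω ν)
    (hf : LipschitzWith L f) (hI : Measurable I) (hCI : ∃ C, ∀ x, |I x| ≤ C) :
    MapsTo (ofFun ∘ neuralFieldMap ν μ ω f I ∘ toFun) (boundedMeasurable G)
      (boundedMeasurable G) := by
  intro g ⟨hg, hgC⟩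
  obtain ⟨Cg, hCg⟩ := edist_zero_lt_top_iff.1 hgC
  obtain ⟨CI, hCI⟩ := hCI
  exact mem_boundedMeasurable_iff.2
    ⟨measurable_neuralFieldMap hω.1 hf.continuous.measurable hI hg,
      exists_bound_neuralFieldMap hω hf hCI hCg⟩

theorem lipschitzOnWith_neuralFieldMap (hμ : 0 ≤ μ) (hω : Integrable ω ν)
    (hf : LipschitzWith L f) :
    LipschitzOnWith (μ * L * ∫ y, |ω y| ∂ν).toNNReal (ofFun ∘ neuralFieldMap ν μ ω f I ∘ toFun)
      (boundedMeasurable G) := by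
  intro g hg h hh
  have hgh := edist_ne_top_of_mem_boundedMeasurable hg hh
  obtain ⟨Cg, hCg⟩ := edist_zero_lt_top_iff.1 hg.2
  obtain ⟨Ch, hCh⟩ := edist_zero_lt_top_iff.1 hh.2
  refine edist_le.2 fun x => ?_
  simp only [Function.comp_apply, toFun_ofFun, edist_dist, Real.dist_eq]
  show _ ≤ ENNReal.ofReal _ * _
  rw [← ENNReal.ofReal_toReal hgh, ← ENNReal.ofReal_mul (by positivity)]
  exact ENNReal.ofReal_le_ofReal <| abs_neuralFieldMap_sub_le hμ hω hf hg.1 hh.1 hCg hCh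
    (abs_sub_le_toReal_edist hgh) x

end NeuralField

theorem stmt4_general (f : ℝ → ℝ) (α : ℝ)
    (hf : ∀ s t, |f s - f t| ≤ α * |s - t|)
    (ω : ℝ × ℝ → ℝ) (hω : Integrable ω)
    (μ : ℝ) (hμ : 0 < μ) (hcontr : μ * α * (∫ x, |ω x|) < 1)
    (I : ℝ × ℝ → ℝ) (hImeas : Measurable I) (hIbd : ∃ C, ∀ x, |I x| ≤ C) :
    ∃ a : ℝ × ℝ → ℝ, Measurable a ∧ (∃ C, ∀ x, |a x| ≤ C) ∧
      (∀ x, a x = μ * (∫ y, ω (x - y) * f (a y)) + I x) ∧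
      ∀ b : ℝ × ℝ → ℝ, Measurable b → (∃ C, ∀ x, |b x| ≤ C) →
        (∀ x, b x = μ * (∫ y, ω (x - y) * f (b y)) + I x) → b = a := by
  have hα : 0 ≤ α := by simpa using (abs_nonneg _).trans (hf 1 0)
  have hfL : LipschitzWith α.toNNReal f := .of_dist_le_mul fun s t => by
    simpa only [Real.dist_eq, Real.coe_toNNReal α hα] using hf s t
  have hK : (μ * α.toNNReal * ∫ x, |ω x|).toNNReal < 1 := by
    rwa [Real.coe_toNNReal α hα, Real.toNNReal_lt_one]
  have isFixedPt_iff {b : ℝ × ℝ → ℝ} :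
      Function.IsFixedPt (ofFun ∘ neuralFieldMap volume μ ω f I ∘ toFun) (ofFun b) ↔
        ∀ x, b x = μ * (∫ y, ω (x - y) * f (b y)) + I x := by
    simp only [Function.IsFixedPt, Function.comp_apply, toFun_ofFun, EmbeddingLike.apply_eq_iff_eq,
      funext_iff, neuralFieldMap, eq_comm]
  obtain ⟨a, ⟨ha, ha_fix⟩, ha_uniq⟩ := existsUnique_isFixedPt_of_lipschitzOnWith
    isClosed_boundedMeasurable.isComplete (mapsTo_neuralFieldMap hω hfL hImeas hIbd) hK
    (lipschitzOnWith_neuralFieldMap hμ.le hω hfL)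
    (fun _ hg _ hh => edist_ne_top_of_mem_boundedMeasurable hg hh)
    (mem_boundedMeasurable_iff.2 ⟨hImeas, hIbd⟩)
  rw [← ofFun_toFun a, mem_boundedMeasurable_iff] at ha
  rw [← ofFun_toFun a, isFixedPt_iff] at ha_fix
  refine ⟨toFun a, ha.1, ha.2, ha_fix, fun b hb hbC hb_fix => ?_⟩
  rw [← isFixedPt_iff] at hb_fix
  exact congrArg toFun (ha_uniq _ ⟨mem_boundedMeasurable_iff.2 ⟨hb, hbC⟩, hb_fix⟩)

/-- Existence and uniqueness in `L^∞(ℝ²)` of the stationary solution of the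
Amari-type neural field equation `a = μ ω ∗ f(a) + I` when `μ α ‖ω‖₁ < 1`. -/
theorem stmt4 (f : ℝ → ℝ) (α : ℝ) (hα : 0 < α)
    (hf : ∀ s t, |f s - f t| ≤ α * |s - t|) (hf0 : f 0 = 0)
    (ω : ℝ × ℝ → ℝ) (hω : Integrable ω)
    (μ : ℝ) (hμ : 0 < μ) (hcontr : μ * α * (∫ x, |ω x|) < 1)
    (I : ℝ × ℝ → ℝ) (hImeas : Measurable I) (hIbd : ∃ C, ∀ x, |I x| ≤ C) :
    ∃ a : ℝ × ℝ → ℝ, Measurable a ∧ (∃ C, ∀ x, |a x| ≤ C) ∧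
      (∀ x, a x = μ * (∫ y, ω (x - y) * f (a y)) + I x) ∧
      ∀ b : ℝ × ℝ → ℝ, Measurable b → (∃ C, ∀ x, |b x| ≤ C) →
        (∀ x, b x = μ * (∫ y, ω (x - y) * f (b y)) + I x) → b = a :=
  stmt4_general f α hf ω hω μ hμ hcontr I hImeas hIbd
end

section
/- Assume 0 < μ < μ₀ := 1/(α‖ω‖₁) and min(1,m)/α ≥ ‖I‖_∞(1 − μ/μ₀)^{−1}. Then the unique stationary solution of a = I + μω∗f_{m,α}(a), with f_{m,α}(s) = max(−m, min(1, αs)), coincides with the unique stationary solution of the linear equation a = I + μα ω∗a. -/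
/-!
A bounded solution `u` of `u = I + r ω ∗ g(u)`, with `|g(s)| ≤ β|s|`, satisfies
`sup |u| ≤ ‖I‖_∞ + |r| β ‖ω‖₁ sup |u|`, hence `sup |u| ≤ ‖I‖_∞ (1 - κ)⁻¹` when
`κ = |r| β ‖ω‖₁ < 1`. For the saturating nonlinearity this bound keeps `α a` inside
`[-m, 1]`, where `f_{m,α}` is linear, so `a` solves the linear equation; the same estimate
with `I = 0`, applied to the difference of two solutions, shows that the linear equation has
at most one bounded solution.
-/

open MeasureTheory Real

lemma abs_le_div_of_forall_abs_le {X : Type*} {u : X → ℝ} {c κ : ℝ} (hκ : κ < 1)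
    (hu : ∃ C, ∀ x, |u x| ≤ C)
    (hstep : ∀ D, (∀ y, |u y| ≤ D) → ∀ x, |u x| ≤ c + κ * D) (x : X) :
    |u x| ≤ c / (1 - κ) := by
  have : Nonempty X := ⟨x⟩
  obtain ⟨C, hC⟩ := hu
  have hbdd : BddAbove (Set.range fun y => |u y|) := ⟨C, by rintro _ ⟨y, rfl⟩; exact hC y⟩
  set S := ⨆ y, |u y|
  have hS : ∀ y, |u y| ≤ S := le_ciSup hbdd
  have hS_fix : S ≤ c + κ * S := ciSup_le (hstep S hS)
  rw [le_div_iff₀ (sub_pos.mpr hκ)]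
  nlinarith [hS x]

lemma abs_max_min_le_abs {R : Type*} [AddCommGroup R] [LinearOrder R] [IsOrderedAddMonoid R]
    {l h t : R} (hl : l ≤ 0) (hh : 0 ≤ h) : |max l (min h t)| ≤ |t| := by
  refine abs_le.mpr ⟨le_max_of_le_right (le_min ?_ (neg_abs_le t)), max_le ?_ ?_⟩
  · exact (neg_nonpos.mpr (abs_nonneg t)).trans hh
  · exact hl.trans (abs_nonneg t)
  · exact (min_le_right h t).trans (le_abs_self t)

section Convolution

variable {G : Type*} [MeasurableSpace G] [AddGroup G] [MeasurableAdd G] [MeasurableNeg G]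
  {μ : Measure G} [μ.IsNegInvariant] [μ.IsAddLeftInvariant] {ω g : G → ℝ} {D : ℝ}

lemma integrable_mul_of_abs_le (hω : Integrable ω μ) (hg : AEStronglyMeasurable g μ)
    (hgD : ∀ y, |g y| ≤ D) (x : G) : Integrable (fun y => ω (x - y) * g y) μ :=
  (hω.comp_sub_left x).mul_bdd hg (ae_of_all _ hgD)

lemma abs_integral_mul_le (hω : Integrable ω μ) (hgD : ∀ y, |g y| ≤ D) (x : G) :
    |∫ y, ω (x - y) * g y ∂μ| ≤ (∫ z, |ω z| ∂μ) * D :=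
  calc |∫ y, ω (x - y) * g y ∂μ| ≤ ∫ y, |ω (x - y)| * D ∂μ := by
        refine norm_integral_le_of_norm_le (G := ℝ) ((hω.comp_sub_left x).abs.mul_const D)
          (ae_of_all _ fun y => ?_)
        rw [Real.norm_eq_abs, abs_mul]
        exact mul_le_mul_of_nonneg_left (hgD y) (abs_nonneg _)
    _ = (∫ z, |ω z| ∂μ) * D := by
        rw [integral_mul_const, integral_sub_left_eq_self (fun z => |ω z|) μ x]

lemma abs_le_of_eq_add_integral {u I : G → ℝ} {c r : ℝ} (hω : Integrable ω μ)
    (hI : ∀ x, |I x| ≤ c) (hgD : ∀ y, |g y| ≤ D)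
    (hu : ∀ x, u x = I x + r * ∫ y, ω (x - y) * g y ∂μ) (x : G) :
    |u x| ≤ c + |r| * (∫ z, |ω z| ∂μ) * D :=
  calc |u x| ≤ |I x| + |r| * |∫ y, ω (x - y) * g y ∂μ| := by
        rw [hu x, ← abs_mul]; exact abs_add_le _ _
    _ ≤ c + |r| * (∫ z, |ω z| ∂μ) * D := by
        rw [mul_assoc]
        gcongr
        exacts [hI x, abs_integral_mul_le hω hgD x]

theorem eq_of_eq_add_integral {u v I : G → ℝ} {r : ℝ} (hω : Integrable ω μ)
    (hr : |r| * ∫ z, |ω z| ∂μ < 1)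
    (hu_meas : AEStronglyMeasurable u μ) (hu_bdd : ∃ C, ∀ x, |u x| ≤ C)
    (hv_meas : AEStronglyMeasurable v μ) (hv_bdd : ∃ C, ∀ x, |v x| ≤ C)
    (hu : ∀ x, u x = I x + r * ∫ y, ω (x - y) * u y ∂μ)
    (hv : ∀ x, v x = I x + r * ∫ y, ω (x - y) * v y ∂μ) :
    u = v := by
  obtain ⟨Cu, hCu⟩ := hu_bdd
  obtain ⟨Cv, hCv⟩ := hv_bdd
  have hdiff : ∀ x, u x - v x = 0 + r * ∫ y, ω (x - y) * (u y - v y) ∂μ := by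
    intro x
    simp_rw [mul_sub]
    rw [integral_sub (integrable_mul_of_abs_le hω hu_meas hCu x)
      (integrable_mul_of_abs_le hω hv_meas hCv x), hu x, hv x]
    ring
  have hdiff_bdd : ∃ C, ∀ x, |u x - v x| ≤ C :=
    ⟨Cu + Cv, fun x => (abs_sub _ _).trans (add_le_add (hCu x) (hCv x))⟩
  funext x
  have hzero := abs_le_div_of_forall_abs_le (c := 0) hr hdiff_bdd
    (fun D hD => abs_le_of_eq_add_integral hω (fun _ => abs_zero.le) hD hdiff) x
  rw [zero_div, abs_nonpos_iff, sub_eq_zero] at hzero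
  exact hzero

end Convolution

theorem stmt11_general (α μ CI m : ℝ) (hα : 0 < α) (hμ : 0 < μ) (hm : 0 ≤ m)
    (ω : ℝ × ℝ → ℝ) (hω : Integrable ω)
    (hcontr : μ * α * (∫ x, |ω x|) < 1)
    (hthresh : CI * (1 - μ * α * (∫ x, |ω x|))⁻¹ ≤ min 1 m / α)
    (I : ℝ × ℝ → ℝ) (hICI : ∀ x, |I x| ≤ CI)
    (F : ℝ → ℝ → ℝ) (hF : ∀ m' s, F m' s = max (-m') (min 1 (α * s)))
    (a b : ℝ × ℝ → ℝ)
    (hameas : Measurable a) (habd : ∃ C, ∀ x, |a x| ≤ C)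
    (hbmeas : Measurable b) (hbbd : ∃ C, ∀ x, |b x| ≤ C)
    (ha : ∀ x, a x = I x + μ * ∫ y, ω (x - y) * F m (a y))
    (hb : ∀ x, b x = I x + μ * α * ∫ y, ω (x - y) * b y) :
    a = b := by
  obtain rfl : F = fun m' s => max (-m') (min 1 (α * s)) := funext fun m' => funext (hF m')
  set K := ∫ x, |ω x|
  have ha_bound : ∀ x, |a x| ≤ CI / (1 - μ * α * K) := by
    refine abs_le_div_of_forall_abs_le hcontr habd fun D hD x => ?_
    have hsat : ∀ y, |max (-m) (min 1 (α * a y))| ≤ α * D := fun y =>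
      (abs_max_min_le_abs (neg_nonpos.mpr hm) zero_le_one).trans
        (by rw [abs_mul, abs_of_pos hα]; exact mul_le_mul_of_nonneg_left (hD y) hα.le)
    calc |a x| ≤ CI + |μ| * K * (α * D) := abs_le_of_eq_add_integral hω hICI hsat ha x
      _ = CI + μ * α * K * D := by rw [abs_of_pos hμ]; ring
  have ha_linear : ∀ y, max (-m) (min 1 (α * a y)) = α * a y := by
    intro y
    have hy : |α * a y| ≤ min 1 m := by
      rw [abs_mul, abs_of_pos hα, ← le_div_iff₀' hα]
      exact (ha_bound y).trans (by rwa [div_eq_mul_inv])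
    obtain ⟨hlow, hup⟩ := abs_le.mp hy
    rw [min_eq_right (hup.trans (min_le_left _ _)), max_eq_right (by linarith [min_le_right 1 m])]
  refine eq_of_eq_add_integral hω (by rwa [abs_of_pos (by positivity)])
    hameas.aestronglyMeasurable habd hbmeas.aestronglyMeasurable hbbd (fun x => ?_) hb
  simp_rw [ha x, ha_linear, mul_left_comm _ α, integral_const_mul, mul_assoc]

/-- When the saturation thresholds of `f_{m,α}` exceed the a priori `L^∞` bound of
the solution, the stationary solution of the Amari-type equation with nonlinearity
`f_{m,α}` coincides with that of the linear equation with slope `α`. -/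
theorem stmt11 (α μ CI m : ℝ) (hα : 0 < α) (hμ : 0 < μ) (hm : 0 ≤ m)
    (ω : ℝ × ℝ → ℝ) (hω : Integrable ω)
    (hcontr : μ * α * (∫ x, |ω x|) < 1)
    (hthresh : CI * (1 - μ * α * (∫ x, |ω x|))⁻¹ ≤ min 1 m / α)
    (I : ℝ × ℝ → ℝ) (hImeas : Measurable I) (hICI : ∀ x, |I x| ≤ CI)
    (F : ℝ → ℝ → ℝ) (hF : ∀ m' s, F m' s = max (-m') (min 1 (α * s)))
    (a b : ℝ × ℝ → ℝ)
    (hameas : Measurable a) (habd : ∃ C, ∀ x, |a x| ≤ C)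
    (hbmeas : Measurable b) (hbbd : ∃ C, ∀ x, |b x| ≤ C)
    (ha : ∀ x, a x = I x + μ * ∫ y, ω (x - y) * F m (a y))
    (hb : ∀ x, b x = I x + μ * α * ∫ y, ω (x - y) * b y) :
    a = b :=
  stmt11_general α μ CI m hα hμ hm ω hω hcontr hthresh I hICI F hF a b hameas habd hbmeas hbbd ha hb
end

section
/- Under the assumptions of the previous context (I(x₁,x₂) = cos(2πλx₂)I₁(x₁), ω radial in L¹(ℝ²), 0 < μ < μ₀), assume additionally that f is odd. Then the stationary solution a_I is 1/(2λ)-antiperiodic in x₂: a_I(x₁, x₂ + 1/(2λ)) = −a_I(x₁, x₂) for a.e. (x₁,x₂) ∈ ℝ². -/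
open MeasureTheory Real

/-!
The solution `a` is the unique bounded fixed point of the contraction
`b ↦ I + μ ω ∗ f(b)`. If `I(x + t) = -I(x)` and `f` is odd, then translation invariance of
the convolution shows that `x ↦ -a(x + t)` is another bounded fixed point, hence equals `a`.
For the input `cos(2πλx₂) I₁(x₁)` take `t = (0, 1/(2λ))`, a half period of the cosine.
-/

lemma LipschitzWith.abs_le_abs_zero_add {f : ℝ → ℝ} {K : NNReal} (hf : LipschitzWith K f)
    (s : ℝ) : |f s| ≤ |f 0| + K * |s| := by
  have h := hf.dist_le_mul s 0
  rw [Real.dist_eq, Real.dist_eq, sub_zero] at h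
  linarith [abs_sub_abs_le_abs_sub (f s) (f 0)]

section AmariFixedPoint

variable {G : Type*} [AddCommGroup G] [MeasurableSpace G] [MeasurableAdd G]
  {ν : Measure G} {ω : G → ℝ} {f : ℝ → ℝ} {K : NNReal}

lemma integrable_kernel_sub_mul_comp [MeasurableNeg G] [ν.IsNegInvariant] [ν.IsAddLeftInvariant]
    (hω : Integrable ω ν) (hf : LipschitzWith K f) {a : G → ℝ} (ha : Measurable a) {C : ℝ}
    (hC : ∀ y, |a y| ≤ C) (x : G) : Integrable (fun y => ω (x - y) * f (a y)) ν :=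
  (hω.comp_sub_left x).mul_bdd (hf.continuous.measurable.comp ha).aestronglyMeasurable
    (c := |f 0| + K * C) <| Filter.Eventually.of_forall fun y =>
      (hf.abs_le_abs_zero_add _).trans (by gcongr; exact hC y)

lemma abs_integral_kernel_sub_le [MeasurableNeg G] [ν.IsNegInvariant] [ν.IsAddLeftInvariant]
    (hω : Integrable ω ν) (hf : LipschitzWith K f) {a b : G → ℝ} (ha : Measurable a)
    (hb : Measurable b) {Ca Cb D : ℝ} (hCa : ∀ y, |a y| ≤ Ca) (hCb : ∀ y, |b y| ≤ Cb)
    (hD : ∀ y, |a y - b y| ≤ D) (x : G) :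
    |∫ y, ω (x - y) * f (a y) ∂ν - ∫ y, ω (x - y) * f (b y) ∂ν| ≤ K * (∫ y, |ω y| ∂ν) * D := by
  have hdiff : ∀ y, |ω (x - y) * f (a y) - ω (x - y) * f (b y)| ≤ |ω (x - y)| * (K * D) :=
    fun y => by
      rw [← mul_sub, abs_mul]
      gcongr
      calc |f (a y) - f (b y)| ≤ K * |a y - b y| := by
            simpa only [Real.dist_eq] using hf.dist_le_mul (a y) (b y)
        _ ≤ K * D := by gcongr; exact hD y
  rw [← integral_sub (integrable_kernel_sub_mul_comp hω hf ha hCa x)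
    (integrable_kernel_sub_mul_comp hω hf hb hCb x)]
  calc |∫ y, (ω (x - y) * f (a y) - ω (x - y) * f (b y)) ∂ν|
      ≤ ∫ y, |ω (x - y) * f (a y) - ω (x - y) * f (b y)| ∂ν :=
        abs_integral_le_integral_abs
    _ ≤ ∫ y, |ω (x - y)| * (K * D) ∂ν :=
        integral_mono_of_nonneg (Filter.Eventually.of_forall fun _ => abs_nonneg _)
          ((hω.comp_sub_left x).abs.mul_const _) (Filter.Eventually.of_forall hdiff)
    _ = K * (∫ y, |ω y| ∂ν) * D := by
        rw [integral_mul_const, integral_sub_left_eq_self (fun y => |ω y|) ν x]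
        ring

lemma eq_of_eq_add_integral_kernel [MeasurableNeg G] [ν.IsNegInvariant] [ν.IsAddLeftInvariant]
    (hω : Integrable ω ν) (hf : LipschitzWith K f) {I : G → ℝ} {μ : ℝ} (hμ : 0 ≤ μ)
    (hcontr : μ * K * (∫ y, |ω y| ∂ν) < 1) {a b : G → ℝ} (ha : Measurable a)
    (hb : Measurable b) {Ca Cb : ℝ} (hCa : ∀ y, |a y| ≤ Ca) (hCb : ∀ y, |b y| ≤ Cb)
    (hafix : ∀ x, a x = I x + μ * ∫ y, ω (x - y) * f (a y) ∂ν)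
    (hbfix : ∀ x, b x = I x + μ * ∫ y, ω (x - y) * f (b y) ∂ν) : a = b := by
  have hbdd : BddAbove (Set.range fun x => |a x - b x|) :=
    ⟨Ca + Cb, by
      rintro _ ⟨x, rfl⟩
      exact (abs_sub _ _).trans (add_le_add (hCa x) (hCb x))⟩
  set S := ⨆ x, |a x - b x|
  have hle_S : ∀ x, |a x - b x| ≤ S := le_ciSup hbdd
  have hS_nonneg : 0 ≤ S := (abs_nonneg _).trans (hle_S 0)
  have hS_le : S ≤ μ * K * (∫ y, |ω y| ∂ν) * S := ciSup_le fun x => by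
    rw [hafix x, hbfix x, add_sub_add_left_eq_sub, ← mul_sub, abs_mul, abs_of_nonneg hμ]
    exact (mul_le_mul_of_nonneg_left
      (abs_integral_kernel_sub_le hω hf ha hb hCa hCb hle_S x) hμ).trans_eq (by ring)
  have hS : S = 0 := by nlinarith
  funext x
  exact sub_eq_zero.mp (abs_nonpos_iff.mp (hS ▸ hle_S x))

lemma neg_comp_add_eq_add_integral_kernel [ν.IsAddRightInvariant] {I : G → ℝ} {μ : ℝ}
    {t : G} (hI : ∀ x, I (x + t) = -I x) (hodd : ∀ s, f (-s) = -f s) {a : G → ℝ}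
    (hafix : ∀ x, a x = I x + μ * ∫ y, ω (x - y) * f (a y) ∂ν) (x : G) :
    -a (x + t) = I x + μ * ∫ y, ω (x - y) * f (-a (y + t)) ∂ν := by
  have htranslate : ∫ y, ω (x + t - y) * f (a y) ∂ν = ∫ y, ω (x - y) * f (a (y + t)) ∂ν := by
    rw [← integral_add_right_eq_self _ t]
    simp only [add_sub_add_right_eq_sub]
  simp only [hafix (x + t), hI, htranslate, hodd, mul_neg, integral_neg]
  ring

end AmariFixedPoint

lemma cos_two_pi_mul_add_half_period {lam : ℝ} (hlam : lam ≠ 0) (s : ℝ) :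
    cos (2 * π * lam * (s + 1 / (2 * lam))) = -cos (2 * π * lam * s) := by
  rw [← cos_add_pi]
  congr 1
  field_simp

theorem stmt14_general (lam α μ : ℝ) (hlam : 0 < lam) (hα : 0 < α) (hμ : 0 < μ)
    (f : ℝ → ℝ) (hf : ∀ s t, |f s - f t| ≤ α * |s - t|)
    (hodd : ∀ s, f (-s) = -f s)
    (ω : ℝ × ℝ → ℝ) (hω : Integrable ω)
    (hcontr : μ * α * (∫ x, |ω x|) < 1)
    (I₁ : ℝ → ℝ)
    (a : ℝ × ℝ → ℝ) (hameas : Measurable a) (habd : ∃ C, ∀ x, |a x| ≤ C)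
    (ha : ∀ x : ℝ × ℝ, a x = Real.cos (2 * π * lam * x.2) * I₁ x.1
      + μ * ∫ y, ω (x - y) * f (a y)) :
    ∀ᵐ p : ℝ × ℝ, a (p.1, p.2 + 1 / (2 * lam)) = -a p := by
  obtain ⟨C, hC⟩ := habd
  have hfL : LipschitzWith ⟨α, hα.le⟩ f :=
    LipschitzWith.of_dist_le_mul fun s t => by
      rw [Real.dist_eq, Real.dist_eq]
      exact hf s t
  set t : ℝ × ℝ := (0, 1 / (2 * lam))
  have hI : ∀ x : ℝ × ℝ, cos (2 * π * lam * (x + t).2) * I₁ (x + t).1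
      = -(cos (2 * π * lam * x.2) * I₁ x.1) := fun x => by
    simp only [t, Prod.fst_add, Prod.snd_add, add_zero, cos_two_pi_mul_add_half_period hlam.ne',
      neg_mul]
  have hshift : (fun x => -a (x + t)) = a :=
    eq_of_eq_add_integral_kernel hω hfL hμ.le hcontr (hameas.comp (measurable_add_const t)).neg
      hameas (Ca := C) (fun y => by simpa only [abs_neg] using hC (y + t)) hC
      (neg_comp_add_eq_add_integral_kernel hI hodd ha) ha
  refine Filter.Eventually.of_forall fun ⟨p₁, p₂⟩ => ?_
  rw [← congrFun hshift (p₁, p₂), neg_neg, Prod.mk_add_mk, add_zero]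

/-- For an odd response function, the stationary solution associated with the input
`I(x₁,x₂) = cos(2πλx₂)I₁(x₁)` is (a.e.) `1/(2λ)`-antiperiodic in `x₂`. -/
theorem stmt14 (lam α μ : ℝ) (hlam : 0 < lam) (hα : 0 < α) (hμ : 0 < μ)
    (f : ℝ → ℝ) (hf : ∀ s t, |f s - f t| ≤ α * |s - t|) (hf0 : f 0 = 0)
    (hodd : ∀ s, f (-s) = -f s)
    (ω : ℝ × ℝ → ℝ) (hω : Integrable ω)
    (hrad : ∀ p q : ℝ × ℝ, p.1 ^ 2 + p.2 ^ 2 = q.1 ^ 2 + q.2 ^ 2 → ω p = ω q)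
    (hcontr : μ * α * (∫ x, |ω x|) < 1)
    (I₁ : ℝ → ℝ) (hI₁ : ∃ C, ∀ s, |I₁ s| ≤ C)
    (a : ℝ × ℝ → ℝ) (hameas : Measurable a) (habd : ∃ C, ∀ x, |a x| ≤ C)
    (ha : ∀ x : ℝ × ℝ, a x = Real.cos (2 * π * lam * x.2) * I₁ x.1
      + μ * ∫ y, ω (x - y) * f (a y)) :
    ∀ᵐ p : ℝ × ℝ, a (p.1, p.2 + 1 / (2 * lam)) = -a p :=
  stmt14_general lam α μ hlam hα hμ f hf hodd ω hω hcontr I₁ a hameas habd ha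
end

section
/- Let f be α-Lipschitz with f(0)=0, ω ∈ S(ℝ²), 0 < μ < μ₀ := 1/(α‖ω‖₁), and let I ∈ L^∞(ℝ²) be L_I-Lipschitz on an open set Ω ⊂ ℝ². Then the unique stationary solution a_I of a = I + μω∗f(a) is Lipschitz continuous on Ω with Lipschitz constant at most L_I + μ α ‖I‖_∞ (1 − μ/μ₀)^{−1} (‖∂_{x₁}ω‖₁² + ‖∂_{x₂}ω‖₁²)^{1/2}. -/
/-!
Let `S = sup |a|`. The fixed-point equation gives `S ≤ ‖I‖_∞ + μ α ‖ω‖₁ S`, hence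
`S ≤ ‖I‖_∞ (1 - μ α ‖ω‖₁)⁻¹`, and `|f ∘ a| ≤ α S`. Then `a x - a y` is `I x - I y` plus `μ`
times a difference of convolutions, bounded by `‖ω(· + v) - ω‖₁ · α S` with `v = x - y`.
Writing `ω (w + v) - ω w = ∫₀¹ ω' (w + t v) v dt`, Tonelli and translation invariance give
`‖ω(· + v) - ω‖₁ ≤ ‖ω' (·) v‖₁ ≤ |v₁| ‖∂₁ω‖₁ + |v₂| ‖∂₂ω‖₁`, and Cauchy–Schwarz finishes.
-/

open MeasureTheory Real

section Translation

variable {E F : Type*} [NormedAddCommGroup E] [NormedSpace ℝ E]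
  [NormedAddCommGroup F] [NormedSpace ℝ F] [CompleteSpace F]
  {ω : E → F} {ω' : E → E →L[ℝ] F}

theorem sub_eq_integral_fderiv_segment (hω' : ∀ p, HasFDerivAt ω (ω' p) p)
    (hω'cont : Continuous ω') (w v : E) :
    ω (w + v) - ω w = ∫ t in (0 : ℝ)..1, ω' (w + t • v) v := by
  have hderiv (t : ℝ) : HasDerivAt (fun t : ℝ => ω (w + t • v)) (ω' (w + t • v) v) t := by
    have hline : HasDerivAt (fun t : ℝ => w + t • v) v t := by
      simpa using ((hasDerivAt_id t).smul_const v).const_add w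
    exact (hω' _).comp_hasDerivAt t hline
  have hcont : Continuous fun t : ℝ => ω' (w + t • v) v := by fun_prop
  simpa using (intervalIntegral.integral_eq_sub_of_hasDerivAt (fun t _ => hderiv t)
    (hcont.intervalIntegrable 0 1)).symm

theorem enorm_sub_le_lintegral_fderiv_segment (hω' : ∀ p, HasFDerivAt ω (ω' p) p)
    (hω'cont : Continuous ω') (w v : E) :
    ‖ω (w + v) - ω w‖ₑ ≤ ∫⁻ t in Set.Ioc (0 : ℝ) 1, ‖ω' (w + t • v) v‖ₑ := by
  rw [sub_eq_integral_fderiv_segment hω' hω'cont, intervalIntegral.integral_of_le zero_le_one]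
  exact enorm_integral_le_lintegral_enorm _

variable [MeasurableSpace E] [BorelSpace E]
  (μ : Measure E) [μ.IsAddRightInvariant] [SFinite μ]

theorem lintegral_enorm_comp_add_sub_le (hω' : ∀ p, HasFDerivAt ω (ω' p) p)
    (hω'cont : Continuous ω') (v : E) :
    ∫⁻ w, ‖ω (w + v) - ω w‖ₑ ∂μ ≤ ∫⁻ w, ‖ω' w v‖ₑ ∂μ :=
  calc ∫⁻ w, ‖ω (w + v) - ω w‖ₑ ∂μ
      ≤ ∫⁻ w, (∫⁻ t in Set.Ioc (0 : ℝ) 1, ‖ω' (w + t • v) v‖ₑ) ∂μ :=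
        lintegral_mono fun w => enorm_sub_le_lintegral_fderiv_segment hω' hω'cont w v
    _ = ∫⁻ t in Set.Ioc (0 : ℝ) 1, ∫⁻ w, ‖ω' (w + t • v) v‖ₑ ∂μ :=
        lintegral_lintegral_swap (Continuous.aemeasurable (by fun_prop))
    _ = ∫⁻ w, ‖ω' w v‖ₑ ∂μ := by
        simp_rw [lintegral_add_right_eq_self (fun w => ‖ω' w v‖ₑ)]
        simp

theorem integral_norm_comp_add_sub_le [SecondCountableTopology E]
    (hω' : ∀ p, HasFDerivAt ω (ω' p) p) (hω'cont : Continuous ω') (v : E) (hv : Integrable (fun w => ω' w v) μ) :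
    ∫ w, ‖ω (w + v) - ω w‖ ∂μ ≤ ∫ w, ‖ω' w v‖ ∂μ := by
  have hω : Continuous ω := continuous_iff_continuousAt.2 fun p => (hω' p).continuousAt
  rw [integral_norm_eq_lintegral_enorm (by fun_prop),
    integral_norm_eq_lintegral_enorm hv.aestronglyMeasurable]
  exact ENNReal.toReal_mono hv.hasFiniteIntegral.ne
    (lintegral_enorm_comp_add_sub_le μ hω' hω'cont v)

end Translation

theorem ContinuousLinearMap.apply_eq_fst_mul_add_snd_mul (L : ℝ × ℝ →L[ℝ] ℝ) (v : ℝ × ℝ) :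
    L v = v.1 * L (1, 0) + v.2 * L (0, 1) := by
  conv_lhs => rw [show v = v.1 • ((1 : ℝ), (0 : ℝ)) + v.2 • ((0 : ℝ), (1 : ℝ)) by ext <;> simp]
  simp only [map_add, map_smul, smul_eq_mul]

theorem add_mul_le_sqrt_mul_sqrt (a b c d : ℝ) :
    a * c + b * d ≤ √(a ^ 2 + b ^ 2) * √(c ^ 2 + d ^ 2) := by
  simpa using Real.sum_mul_le_sqrt_mul_sqrt Finset.univ ![a, b] ![c, d]

section Plane

variable {ν : Measure (ℝ × ℝ)} {ω' : ℝ × ℝ → ℝ × ℝ →L[ℝ] ℝ}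

theorem integrable_apply_of_integrable_apply_basis
    (hd1 : Integrable (fun p => ω' p (1, 0)) ν) (hd2 : Integrable (fun p => ω' p (0, 1)) ν)
    (v : ℝ × ℝ) :
    Integrable (fun p => ω' p v) ν := by
  simp_rw [ContinuousLinearMap.apply_eq_fst_mul_add_snd_mul (ω' _) v]
  exact (hd1.const_mul _).add (hd2.const_mul _)

theorem integral_abs_apply_le
    (hd1 : Integrable (fun p => ω' p (1, 0)) ν) (hd2 : Integrable (fun p => ω' p (0, 1)) ν)
    (v : ℝ × ℝ) :
    ∫ p, |ω' p v| ∂ν ≤ √(v.1 ^ 2 + v.2 ^ 2) *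
      √((∫ p, |ω' p (1, 0)| ∂ν) ^ 2 + (∫ p, |ω' p (0, 1)| ∂ν) ^ 2) := by
  have hbound (p : ℝ × ℝ) : |ω' p v| ≤ |v.1| * |ω' p (1, 0)| + |v.2| * |ω' p (0, 1)| := by
    rw [ContinuousLinearMap.apply_eq_fst_mul_add_snd_mul (ω' p) v, ← abs_mul, ← abs_mul]
    exact abs_add_le _ _
  calc ∫ p, |ω' p v| ∂ν
      ≤ ∫ p, |v.1| * |ω' p (1, 0)| + |v.2| * |ω' p (0, 1)| ∂ν :=
        integral_mono (integrable_apply_of_integrable_apply_basis hd1 hd2 v).abs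
          ((hd1.abs.const_mul _).add (hd2.abs.const_mul _)) hbound
    _ = |v.1| * ∫ p, |ω' p (1, 0)| ∂ν + |v.2| * ∫ p, |ω' p (0, 1)| ∂ν := by
        rw [integral_add (hd1.abs.const_mul _) (hd2.abs.const_mul _), integral_const_mul,
          integral_const_mul]
    _ ≤ _ := by simpa only [sq_abs] using add_mul_le_sqrt_mul_sqrt |v.1| |v.2| _ _

end Plane

theorem abs_integral_mul_le_of_abs_le {X : Type*} [MeasurableSpace X] {ν : Measure X}
    {φ g : X → ℝ} {M : ℝ} (hφ : Integrable φ ν) (hg : AEStronglyMeasurable g ν)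
    (hgM : ∀ z, |g z| ≤ M) :
    |∫ z, φ z * g z ∂ν| ≤ (∫ z, |φ z| ∂ν) * M := by
  have hφg : Integrable (fun z => φ z * g z) ν := hφ.mul_bdd hg (ae_of_all _ hgM)
  calc |∫ z, φ z * g z ∂ν| ≤ ∫ z, |φ z * g z| ∂ν := abs_integral_le_integral_abs
    _ ≤ ∫ z, |φ z| * M ∂ν := integral_mono hφg.abs (hφ.abs.mul_const M) fun z => by
        rw [abs_mul]; exact mul_le_mul_of_nonneg_left (hgM z) (abs_nonneg _)
    _ = (∫ z, |φ z| ∂ν) * M := integral_mul_const _ _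

section Convolution

variable {G : Type*} [AddCommGroup G] [MeasurableSpace G] [MeasurableAdd G] [MeasurableNeg G]
  {ν : Measure G} [ν.IsNegInvariant] [ν.IsAddLeftInvariant] {ω g : G → ℝ} {M : ℝ}

theorem abs_integral_comp_sub_mul_le (hω : Integrable ω ν) (hg : AEStronglyMeasurable g ν)
    (hgM : ∀ z, |g z| ≤ M) (x : G) :
    |∫ z, ω (x - z) * g z ∂ν| ≤ (∫ z, |ω z| ∂ν) * M := by
  simpa only [integral_sub_left_eq_self (fun z => |ω z|)] using
    abs_integral_mul_le_of_abs_le (hω.comp_sub_left x) hg hgM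

theorem abs_integral_comp_sub_mul_sub_le (hω : Integrable ω ν) (hg : AEStronglyMeasurable g ν)
    (hgM : ∀ z, |g z| ≤ M) (x y : G) :
    |∫ z, ω (x - z) * g z ∂ν - ∫ z, ω (y - z) * g z ∂ν|
      ≤ (∫ w, |ω (w + (x - y)) - ω w| ∂ν) * M := by
  have hφ : Integrable (fun z => ω (x - z) - ω (y - z)) ν :=
    (hω.comp_sub_left x).sub (hω.comp_sub_left y)
  rw [← integral_sub ((hω.comp_sub_left x).mul_bdd hg (ae_of_all _ hgM))
    ((hω.comp_sub_left y).mul_bdd hg (ae_of_all _ hgM))]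
  simp_rw [← sub_mul]
  have hshift : ∫ z, |ω (x - z) - ω (y - z)| ∂ν = ∫ w, |ω (w + (x - y)) - ω w| ∂ν := by
    rw [← integral_sub_left_eq_self (fun w => |ω (w + (x - y)) - ω w|) ν y]
    simp only [sub_add_sub_cancel']
  exact hshift ▸ abs_integral_mul_le_of_abs_le hφ hg hgM

variable (ν) in
def IsStationarySolution (ω : G → ℝ) (f : ℝ → ℝ) (μ : ℝ) (I a : G → ℝ) : Prop :=
  ∀ x, a x = I x + μ * ∫ y, ω (x - y) * f (a y) ∂ν

theorem IsStationarySolution.abs_le {f : ℝ → ℝ} {α μ CI : ℝ} {I a : G → ℝ}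
    (ha : IsStationarySolution ν ω f μ I a) (hω : Integrable ω ν) (hα : 0 ≤ α)
    (hf : ∀ s, |f s| ≤ α * |s|) (hfa : AEStronglyMeasurable (fun z => f (a z)) ν)
    (hμ : 0 ≤ μ) (hcontr : μ * α * ∫ z, |ω z| ∂ν < 1) (hI : ∀ x, |I x| ≤ CI)
    (habd : BddAbove (Set.range fun z => |a z|)) (z : G) :
    |a z| ≤ CI * (1 - μ * α * ∫ z, |ω z| ∂ν)⁻¹ := by
  set K := ∫ z, |ω z| ∂ν
  set S := ⨆ z, |a z|
  have hS (z : G) : |a z| ≤ S := le_ciSup habd z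
  have hfS (z : G) : |f (a z)| ≤ α * S := (hf _).trans (mul_le_mul_of_nonneg_left (hS z) hα)
  have hSle : S ≤ CI + μ * α * K * S := ciSup_le fun z =>
    calc |a z| ≤ |I z| + μ * |∫ w, ω (z - w) * f (a w) ∂ν| := by
          rw [ha z, ← abs_of_nonneg hμ, ← abs_mul, abs_of_nonneg hμ]; exact abs_add_le _ _
      _ ≤ CI + μ * (K * (α * S)) := by
          gcongr
          exacts [hI z, abs_integral_comp_sub_mul_le hω hfa hfS z]
      _ = CI + μ * α * K * S := by ring
  rw [← div_eq_mul_inv, le_div_iff₀ (by linarith)]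
  nlinarith [hS z]

end Convolution

theorem stmt17_general (f : ℝ → ℝ) (α : ℝ) (hα : 0 < α)
    (hf : ∀ s t, |f s - f t| ≤ α * |s - t|) (hf0 : f 0 = 0)
    (ω : ℝ × ℝ → ℝ) (hωint : Integrable ω)
    (ω' : ℝ × ℝ → ℝ × ℝ →L[ℝ] ℝ) (hω' : ∀ p, HasFDerivAt ω (ω' p) p)
    (hω'cont : Continuous ω')
    (hd1 : Integrable (fun p => ω' p (1, 0))) (hd2 : Integrable (fun p => ω' p (0, 1)))
    (μ : ℝ) (hμ : 0 < μ) (hcontr : μ * α * (∫ x, |ω x|) < 1)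
    (Ω : Set (ℝ × ℝ))
    (I : ℝ × ℝ → ℝ) (CI LI : ℝ) (hICI : ∀ x, |I x| ≤ CI)
    (hILip : ∀ x ∈ Ω, ∀ y ∈ Ω,
      |I x - I y| ≤ LI * Real.sqrt ((x.1 - y.1) ^ 2 + (x.2 - y.2) ^ 2))
    (a : ℝ × ℝ → ℝ) (hameas : Measurable a) (habd : ∃ C, ∀ x, |a x| ≤ C)
    (ha : ∀ x, a x = I x + μ * ∫ y, ω (x - y) * f (a y)) :
    ∀ x ∈ Ω, ∀ y ∈ Ω,
      |a x - a y| ≤ (LI + μ * α * CI * (1 - μ * α * (∫ x, |ω x|))⁻¹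
          * Real.sqrt ((∫ p, |ω' p (1, 0)|) ^ 2 + (∫ p, |ω' p (0, 1)|) ^ 2))
        * Real.sqrt ((x.1 - y.1) ^ 2 + (x.2 - y.2) ^ 2) := by
  intro x hx y hy
  set d := √((x.1 - y.1) ^ 2 + (x.2 - y.2) ^ 2)
  set D := √((∫ p, |ω' p (1, 0)|) ^ 2 + (∫ p, |ω' p (0, 1)|) ^ 2)
  set M := α * (CI * (1 - μ * α * ∫ x, |ω x|)⁻¹)
  have hf_lin (s : ℝ) : |f s| ≤ α * |s| := by simpa [hf0] using hf s 0
  have hfa : AEStronglyMeasurable (fun z => f (a z)) :=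
    ((LipschitzWith.of_dist_le' hf).continuous.measurable.comp hameas).aestronglyMeasurable
  obtain ⟨C, hC⟩ := habd
  have hfM (z : ℝ × ℝ) : |f (a z)| ≤ M :=
    (hf_lin _).trans <| mul_le_mul_of_nonneg_left (IsStationarySolution.abs_le ha hωint hα.le
      hf_lin hfa hμ.le hcontr hICI ⟨C, Set.forall_mem_range.2 hC⟩ z) hα.le
  have hω_shift : ∫ w, |ω (w + (x - y)) - ω w| ≤ d * D :=
    (integral_norm_comp_add_sub_le volume hω' hω'cont _
      (integrable_apply_of_integrable_apply_basis hd1 hd2 _)).trans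
      (integral_abs_apply_le hd1 hd2 (x - y))
  calc |a x - a y|
      = |(I x - I y) + μ * ((∫ z, ω (x - z) * f (a z)) - ∫ z, ω (y - z) * f (a z))| := by
        rw [ha x, ha y]; congr 1; ring
    _ ≤ |I x - I y| + μ * |(∫ z, ω (x - z) * f (a z)) - ∫ z, ω (y - z) * f (a z)| := by
        rw [← abs_of_pos hμ, ← abs_mul, abs_of_pos hμ]; exact abs_add_le _ _
    _ ≤ LI * d + μ * (d * D * M) := by
        gcongr
        · exact hILip x hx y hy
        · exact (abs_integral_comp_sub_mul_sub_le hωint hfa hfM x y).trans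
            (mul_le_mul_of_nonneg_right hω_shift ((abs_nonneg _).trans (hfM 0)))
    _ = _ := by ring

/-- Lipschitz regularity of the stationary solution of the Amari-type equation on an
open set `Ω` where the input is Lipschitz, with the explicit Lipschitz constant
`L_I + μ α ‖I‖_∞ (1 − μ/μ₀)⁻¹ (‖∂₁ω‖₁² + ‖∂₂ω‖₁²)^{1/2}`. -/
theorem stmt17 (f : ℝ → ℝ) (α : ℝ) (hα : 0 < α)
    (hf : ∀ s t, |f s - f t| ≤ α * |s - t|) (hf0 : f 0 = 0)
    (ω : ℝ × ℝ → ℝ) (hωint : Integrable ω)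
    (ω' : ℝ × ℝ → ℝ × ℝ →L[ℝ] ℝ) (hω' : ∀ p, HasFDerivAt ω (ω' p) p)
    (hω'cont : Continuous ω')
    (hd1 : Integrable (fun p => ω' p (1, 0))) (hd2 : Integrable (fun p => ω' p (0, 1)))
    (μ : ℝ) (hμ : 0 < μ) (hcontr : μ * α * (∫ x, |ω x|) < 1)
    (Ω : Set (ℝ × ℝ)) (hΩ : IsOpen Ω)
    (I : ℝ × ℝ → ℝ) (CI LI : ℝ) (hICI : ∀ x, |I x| ≤ CI)
    (hILip : ∀ x ∈ Ω, ∀ y ∈ Ω,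
      |I x - I y| ≤ LI * Real.sqrt ((x.1 - y.1) ^ 2 + (x.2 - y.2) ^ 2))
    (a : ℝ × ℝ → ℝ) (hameas : Measurable a) (habd : ∃ C, ∀ x, |a x| ≤ C)
    (ha : ∀ x, a x = I x + μ * ∫ y, ω (x - y) * f (a y)) :
    ∀ x ∈ Ω, ∀ y ∈ Ω,
      |a x - a y| ≤ (LI + μ * α * CI * (1 - μ * α * (∫ x, |ω x|))⁻¹
          * Real.sqrt ((∫ p, |ω' p (1, 0)|) ^ 2 + (∫ p, |ω' p (0, 1)|) ^ 2))
        * Real.sqrt ((x.1 - y.1) ^ 2 + (x.2 - y.2) ^ 2) :=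
  stmt17_general f α hα hf hf0 ω hωint ω' hω' hω'cont hd1 hd2 μ hμ hcontr Ω I CI LI hICI hILip a
    hameas habd ha
end
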